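/- Let Θ be a finite nonempty set and Φ : Δ_Θ → ℝ a differentiable entropy. Then the loss λ^Φ(μ) := Φ*(∇Φ(μ))·𝟏 − ∇Φ(μ) is proper: for all μ, μ' in the relative interior of Δ_Θ, ⟨μ, λ^Φ(μ')⟩ ≥ ⟨μ, λ^Φ(μ)⟩. -/

import Mathlib

open Finset

/-- The probability simplex over a finite set `Θ`. -/
def probSimplex (Θ : Type*) [Fintype Θ] : Set (Θ → ℝ) :=
  {μ | (∀ θ, 0 ≤ μ θ) ∧ ∑ θ, μ θ = 1}

/-- The relative interior of the probability simplex. -/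
def probSimplexRI (Θ : Type*) [Fintype Θ] : Set (Θ → ℝ) :=
  {μ | (∀ θ, 0 < μ θ) ∧ ∑ θ, μ θ = 1}

/-- Standard inner product on `ℝ^Θ`. -/
noncomputable def ip {Θ : Type*} [Fintype Θ] (v w : Θ → ℝ) : ℝ := ∑ θ, v θ * w θ

/-- Convex conjugate of a function on the probability simplex:
`Φ*(v) = sup_{μ ∈ Δ_Θ} ⟨μ, v⟩ − Φ(μ)`. -/
noncomputable def conjF {Θ : Type*} [Fintype Θ] (Φ : (Θ → ℝ) → ℝ) (v : Θ → ℝ) : ℝ :=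
  sSup ((fun μ => ip μ v - Φ μ) '' probSimplex Θ)

/-- The continuous linear functional `w ↦ ⟨g, w⟩` associated with a vector `g : Θ → ℝ`;
used to express that `g` is a gradient. -/
noncomputable def toCLM {Θ : Type*} [Fintype Θ] (g : Θ → ℝ) : (Θ → ℝ) →L[ℝ] ℝ :=
  ∑ θ, g θ • (ContinuousLinearMap.proj θ : (Θ → ℝ) →L[ℝ] ℝ)

/-- Bregman divergence `D_Φ(μ', μ) = Φ(μ') − Φ(μ) − ⟨∇Φ(μ), μ' − μ⟩`, where the
gradient of `Φ` is given by `g`. -/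
noncomputable def bregDiv {Θ : Type*} [Fintype Θ] (Φ : (Θ → ℝ) → ℝ)
    (g : (Θ → ℝ) → Θ → ℝ) (μ' μ : Θ → ℝ) : ℝ :=
  Φ μ' - Φ μ - ip (g μ) (fun θ => μ' θ - μ θ)

/-- The proper loss `λ^Φ(μ) = Φ*(∇Φ(μ))·𝟏 − ∇Φ(μ)` associated with entropy `Φ`
with gradient `g`. -/
noncomputable def lamLoss {Θ : Type*} [Fintype Θ] (Φ : (Θ → ℝ) → ℝ)
    (g : (Θ → ℝ) → Θ → ℝ) (μ : Θ → ℝ) : Θ → ℝ :=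
  fun θ => conjF Φ (g μ) - g μ θ

/-- Negative Shannon entropy `(−H)(μ) = ∑ θ, μ(θ) log μ(θ)` (with `0 log 0 = 0`,
since `Real.log 0 = 0`). -/
noncomputable def negH {Θ : Type*} [Fintype Θ] (μ : Θ → ℝ) : ℝ :=
  ∑ θ, μ θ * Real.log (μ θ)

/-! The tangent-plane inequality `Φ ν ≥ Φ μ + ⟨∇Φ(μ), ν − μ⟩` does all the work. Taking the
supremum over `ν` shows that `Φ*(∇Φ(μ))` is attained at `ν = μ`, and with this value
`⟨μ, λ^Φ(μ')⟩ − ⟨μ, λ^Φ(μ)⟩` is the Bregman divergence `D_Φ(μ, μ')`, which is nonnegative by the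
same inequality. -/

theorem ConvexOn.apply_sub_le_of_hasFDerivWithinAt {E : Type*} [NormedAddCommGroup E]
    [NormedSpace ℝ E] {s : Set E} {f : E → ℝ} {f' : E →L[ℝ] ℝ} {x y : E}
    (hf : ConvexOn ℝ s f) (hd : HasFDerivWithinAt f f' s x) (hx : x ∈ s) (hy : y ∈ s) :
    f' (y - x) ≤ f y - f x := by
  set p := AffineMap.lineMap (k := ℝ) x y
  have hp0 : p 0 = x := AffineMap.lineMap_apply_zero x y
  have hp1 : p 1 = y := AffineMap.lineMap_apply_one x y
  have hderiv : HasDerivWithinAt (f ∘ p) (f' (y - x)) (p ⁻¹' s) 0 :=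
    hd.comp_hasDerivWithinAt_of_eq 0 AffineMap.hasDerivWithinAt_lineMap
      (Set.mapsTo_preimage p s) hp0.symm
  have hslope := (hf.comp_affineMap p).le_slope_of_hasDerivWithinAt
    (by simpa [hp0] using hx) (by simpa [hp1] using hy) zero_lt_one hderiv
  simpa [slope_def_field, hp0, hp1] using hslope

section Simplex

variable {Θ : Type*} [Fintype Θ]

theorem probSimplexRI_subset : probSimplexRI Θ ⊆ probSimplex Θ :=
  fun _ hμ => ⟨fun θ => (hμ.1 θ).le, hμ.2⟩

theorem ip_comm (v w : Θ → ℝ) : ip v w = ip w v := by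
  simp only [ip, mul_comm]

theorem ip_sub_right (v w w' : Θ → ℝ) : ip v (fun θ => w θ - w' θ) = ip v w - ip v w' := by
  simp only [ip, mul_sub, sum_sub_distrib]

theorem toCLM_apply (g w : Θ → ℝ) : toCLM g w = ip g w := by
  simp [toCLM, ip]

variable {Φ : (Θ → ℝ) → ℝ} {gradΦ : (Θ → ℝ) → Θ → ℝ} {μ : Θ → ℝ}

theorem bregDiv_nonneg (hconv : ConvexOn ℝ (probSimplex Θ) Φ)
    (hd : HasFDerivWithinAt Φ (toCLM (gradΦ μ)) (probSimplex Θ) μ) (hμ : μ ∈ probSimplex Θ)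
    {ν : Θ → ℝ} (hν : ν ∈ probSimplex Θ) : 0 ≤ bregDiv Φ gradΦ ν μ := by
  have h := hconv.apply_sub_le_of_hasFDerivWithinAt hd hμ hν
  rw [toCLM_apply] at h
  exact sub_nonneg.2 h

theorem conjF_gradient_eq (hconv : ConvexOn ℝ (probSimplex Θ) Φ)
    (hd : HasFDerivWithinAt Φ (toCLM (gradΦ μ)) (probSimplex Θ) μ) (hμ : μ ∈ probSimplex Θ) :
    conjF Φ (gradΦ μ) = ip μ (gradΦ μ) - Φ μ := by
  refine IsGreatest.csSup_eq ⟨⟨μ, hμ, rfl⟩, ?_⟩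
  rintro _ ⟨ν, hν, rfl⟩
  have h := bregDiv_nonneg hconv hd hμ hν
  rw [bregDiv, ip_sub_right, ip_comm (gradΦ μ) ν, ip_comm (gradΦ μ) μ] at h
  dsimp only
  linarith

theorem ip_lamLoss (hμ : ∑ θ, μ θ = 1) (ν : Θ → ℝ) :
    ip μ (lamLoss Φ gradΦ ν) = conjF Φ (gradΦ ν) - ip μ (gradΦ ν) := by
  simp only [lamLoss, ip, mul_sub, sum_sub_distrib, ← sum_mul, hμ, one_mul]

end Simplex

theorem lamLoss_proper_general {Θ : Type*} [Fintype Θ]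
    (Φ : (Θ → ℝ) → ℝ) (gradΦ : (Θ → ℝ) → Θ → ℝ)
    (hconv : ConvexOn ℝ (probSimplex Θ) Φ)
    (hdiff : ∀ μ ∈ probSimplexRI Θ,
      HasFDerivWithinAt Φ (toCLM (gradΦ μ)) (probSimplex Θ) μ)
    (μ : Θ → ℝ) (hμ : μ ∈ probSimplexRI Θ)
    (μ' : Θ → ℝ) (hμ' : μ' ∈ probSimplexRI Θ) :
    ip μ (lamLoss Φ gradΦ μ') ≥ ip μ (lamLoss Φ gradΦ μ) := by
  have hμS := probSimplexRI_subset hμ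
  have hμ'S := probSimplexRI_subset hμ'
  have hD := bregDiv_nonneg hconv (hdiff μ' hμ') hμ'S hμS
  rw [bregDiv, ip_sub_right, ip_comm (gradΦ μ') μ, ip_comm (gradΦ μ') μ'] at hD
  rw [ge_iff_le, ip_lamLoss hμ.2, ip_lamLoss hμ.2, conjF_gradient_eq hconv (hdiff μ' hμ') hμ'S,
    conjF_gradient_eq hconv (hdiff μ hμ) hμS]
  linarith

/-- Lemma 3 of the paper: the loss `λ^Φ(μ) = Φ*(∇Φ(μ))·𝟏 − ∇Φ(μ)`
associated with a differentiable entropy `Φ` is proper: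
`⟨μ, λ^Φ(μ')⟩ ≥ ⟨μ, λ^Φ(μ)⟩`. -/
theorem lamLoss_proper {Θ : Type*} [Fintype Θ] [Nonempty Θ]
    (Φ : (Θ → ℝ) → ℝ) (gradΦ : (Θ → ℝ) → Θ → ℝ)
    (hconv : ConvexOn ℝ (probSimplex Θ) Φ)
    (hlsc : LowerSemicontinuousOn Φ (probSimplex Θ))
    (hdiff : ∀ μ ∈ probSimplexRI Θ,
      HasFDerivWithinAt Φ (toCLM (gradΦ μ)) (probSimplex Θ) μ)
    (hFY : ∀ μ ∈ probSimplexRI Θ, conjF Φ (gradΦ μ) = ip μ (gradΦ μ) - Φ μ)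
    (μ : Θ → ℝ) (hμ : μ ∈ probSimplexRI Θ)
    (μ' : Θ → ℝ) (hμ' : μ' ∈ probSimplexRI Θ) :
    ip μ (lamLoss Φ gradΦ μ') ≥ ip μ (lamLoss Φ gradΦ μ) :=
  lamLoss_proper_general Φ gradΦ hconv hdiff μ hμ μ' hμ'
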